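/- arXiv:2306.15247 — 8 statements merged into one kernel-verified Lean document; each statement's English description precedes it below -/
import Mathlib

section
/- Let x : V × F → {0,1} be an assignment of functions in an ordered chain F = {1,…,ℓ} to cloud nodes V such that each function is assigned to exactly one node (Σ_{v∈V} x(v,s) = 1 for all s), and assume the consecutive-connectivity constraints: whenever x(v0,s) = 1 and x(v,s+1) = 1 with v ∈ V(v0) (v not reachable from v0), a contradiction arises, i.e., x(v0,s) + x(v,s+1) ≤ 1 for all v0 ∈ V, v ∈ V(v0), 1 ≤ s < ℓ. Then for all 1 ≤ s < s0 ≤ ℓ and all v0 ∈ V, it holds that x(v0,s) + x(v,s0) ≤ 1 for every v ∈ V(v0). -/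
/-- If a binary assignment `x` of functions `1,…,ℓ` to cloud nodes `V` satisfies the
assignment constraints and the consecutive-connectivity constraints
`x(v0,s) + x(v,s+1) ≤ 1` for `v ∈ V(v0)`, then `x(v0,s) + x(v,s0) ≤ 1` holds for all
`1 ≤ s < s0 ≤ ℓ` and `v ∈ V(v0)`. -/
theorem consecutive_implies_nonadjacent {I : Type*} [DecidableEq I] (L : I → I → Prop)
    (V : Finset I) (ℓ : ℕ) (x : I → ℕ → ℤ)
    (hbin : ∀ v ∈ V, ∀ s, x v s = 0 ∨ x v s = 1)
    (hassign : ∀ s, 1 ≤ s → s ≤ ℓ → ∑ v ∈ V, x v s = 1)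
    (hpair : ∀ v0 ∈ V, ∀ v ∈ V, v ≠ v0 → ¬ Relation.ReflTransGen L v0 v →
      ∀ s, 1 ≤ s → s < ℓ → x v0 s + x v (s + 1) ≤ 1) :
    ∀ v0 ∈ V, ∀ v ∈ V, v ≠ v0 → ¬ Relation.ReflTransGen L v0 v →
      ∀ s s0, 1 ≤ s → s < s0 → s0 ≤ ℓ → x v0 s + x v s0 ≤ 1 := by
  intro v0 hv0 v hv hne hnr s s0 hs hss0 hs0l
  by_contra hcon
  push_neg at hcon
  have hb0 := hbin v0 hv0 s
  have hb := hbin v hv s0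
  have hx0 : x v0 s = 1 := by omega
  have hx : x v s0 = 1 := by omega
  -- every node assigned at a step t with s ≤ t ≤ ℓ is reachable from v0
  have key : ∀ t, s ≤ t → t ≤ ℓ → ∀ w ∈ V, x w t = 1 → Relation.ReflTransGen L v0 w := by
    intro t hst
    induction t, hst using Nat.le_induction with
    | base =>
      intro _ w hw hxw
      by_cases hwe : w = v0
      · exact hwe ▸ Relation.ReflTransGen.refl
      · exfalso
        have hsum := hassign s hs (by omega)
        have hsub : x w s ≤ ∑ u ∈ V.erase v0, x u s :=
          Finset.single_le_sum (f := fun u => x u s) (fun u hu => by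
            show (0:ℤ) ≤ x u s
            rcases hbin u (Finset.mem_of_mem_erase hu) s with h | h <;> omega)
            (Finset.mem_erase.mpr ⟨hwe, hw⟩)
        have hsplit := Finset.sum_erase_add V (fun u => x u s) hv0
        omega
    | succ t hst ih =>
      intro ht1 w hw hxw
      have ht : t ≤ ℓ := by omega
      -- there is a node assigned at step t
      obtain ⟨u, hu, hxu⟩ : ∃ u ∈ V, x u t = 1 := by
        by_contra hno
        push_neg at hno
        have : ∑ u ∈ V, x u t = 0 := Finset.sum_eq_zero (fun u huV => by
          rcases hbin u huV t with h | h
          · exact h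
          · exact absurd h (hno u huV))
        have := hassign t (by omega) ht
        omega
      have hru : Relation.ReflTransGen L v0 u := ih ht u hu hxu
      by_cases hwe : w = u
      · exact hwe ▸ hru
      · by_cases hruw : Relation.ReflTransGen L u w
        · exact hru.trans hruw
        · have := hpair u hu w hw hwe hruw t (by omega) (by omega)
          omega
  exact hnr (key s0 (by omega) hs0l v hv hx)
end

section
/- Let x : V × {1,…,ℓ} → {0,1} satisfy Σ_{v∈V} x(v,s) = 1 for all s, and the aggregated connectivity inequalities Σ_{v∈V\V(v0)} x(v,s) ≤ Σ_{v∈V\V(v0)} x(v,s+1) for all v0 ∈ V and 1 ≤ s < ℓ. Then x satisfies the pairwise inequalities x(v0,s) + x(v,s0) ≤ 1 for all v0 ∈ V, v ∈ V(v0), and 1 ≤ s < s0 ≤ ℓ. -/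
/-!
The aggregated inequalities say that the mass `t ↦ ∑ u ∈ S, x u t` of the set
`S = {u ∈ V : u = v0 ∨ v0 ⟶* u}` is nondecreasing on `[1, ℓ]`. So whatever sits at `v0` at
time `s` is still inside `S` at time `s0`, and the unit mass of time `s0` leaves at most the
rest for `v ∉ S`.
-/

open Finset

theorem Finset.add_sum_le_sum_of_subset {ι M : Type*} [DecidableEq ι] [AddCommMonoid M]
    [PartialOrder M] [IsOrderedAddMonoid M] {s t : Finset ι} {f : ι → M} {i : ι}
    (hi : i ∈ t) (his : i ∉ s) (hst : s ⊆ t) (hf : ∀ j ∈ t, 0 ≤ f j) :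
    f i + ∑ j ∈ s, f j ≤ ∑ j ∈ t, f j := by
  rw [← sum_insert his]
  exact sum_le_sum_of_subset_of_nonneg (insert_subset hi hst) fun j hj _ ↦ hf j hj

theorem monotoneOn_Icc_of_le_add_one {β : Type*} [Preorder β] {f : ℕ → β} {a b : ℕ}
    (hf : ∀ n, a ≤ n → n < b → f n ≤ f (n + 1)) : MonotoneOn f (Set.Icc a b) :=
  monotoneOn_of_le_succ Set.ordConnected_Icc fun n _ hn hn' ↦ by
    rw [Order.succ_eq_add_one] at hn' ⊢
    exact hf n hn.1 (Nat.lt_of_succ_le hn'.2)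

/-- If a binary assignment `x` satisfies the assignment constraints and the aggregated
connectivity inequalities `Σ_{v∈V∖V(v0)} x(v,s) ≤ Σ_{v∈V∖V(v0)} x(v,s+1)`, then it
satisfies the pairwise inequalities `x(v0,s) + x(v,s0) ≤ 1` for all `v ∈ V(v0)` and
`1 ≤ s < s0 ≤ ℓ`. -/
theorem aggregated_implies_pairwise {I : Type*} [DecidableEq I] (L : I → I → Prop)
    [DecidableRel (Relation.ReflTransGen L)] (V : Finset I) (ℓ : ℕ) (x : I → ℕ → ℤ)
    (hbin : ∀ v ∈ V, ∀ s, x v s = 0 ∨ x v s = 1)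
    (hassign : ∀ s, 1 ≤ s → s ≤ ℓ → ∑ v ∈ V, x v s = 1)
    (hagg : ∀ v0 ∈ V, ∀ s, 1 ≤ s → s < ℓ →
      ∑ v ∈ V.filter (fun v => v = v0 ∨ Relation.ReflTransGen L v0 v), x v s
        ≤ ∑ v ∈ V.filter (fun v => v = v0 ∨ Relation.ReflTransGen L v0 v), x v (s + 1)) :
    ∀ v0 ∈ V, ∀ v ∈ V, v ≠ v0 → ¬ Relation.ReflTransGen L v0 v →
      ∀ s s0, 1 ≤ s → s < s0 → s0 ≤ ℓ → x v0 s + x v s0 ≤ 1 := by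
  intro v0 hv0 v hv hne hnr s s0 hs hss0 hs0
  set S := V.filter (fun v => v = v0 ∨ Relation.ReflTransGen L v0 v)
  have hnonneg : ∀ u ∈ V, ∀ t, 0 ≤ x u t := fun u hu t ↦ by
    rcases hbin u hu t with h | h <;> simp [h]
  have hmono : MonotoneOn (fun t ↦ ∑ u ∈ S, x u t) (Set.Icc 1 ℓ) :=
    monotoneOn_Icc_of_le_add_one (hagg v0 hv0)
  have hvS : v ∉ S := by simp [S, hne, hnr]
  calc x v0 s + x v s0
      ≤ ∑ u ∈ S, x u s + x v s0 := by
        gcongr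
        exact single_le_sum (fun u hu ↦ hnonneg u (filter_subset _ _ hu) s)
          (mem_filter.2 ⟨hv0, Or.inl rfl⟩)
    _ ≤ ∑ u ∈ S, x u s0 + x v s0 := by
        gcongr ?_ + _
        exact hmono ⟨hs, by omega⟩ ⟨by omega, hs0⟩ hss0.le
    _ ≤ ∑ u ∈ V, x u s0 := by
        rw [add_comm]
        exact add_sum_le_sum_of_subset hv hvS (filter_subset _ _) fun u hu ↦ hnonneg u hu s0
    _ = 1 := hassign s0 (by omega) hs0
end

section
/- Let x : V × {1,…,ℓ} → {0,1} satisfy Σ_{v∈V} x(v,s) = 1 for all s, and the pairwise connectivity constraints x(v0,s) + x(v,s+1) ≤ 1 for all v0 ∈ V, v ∈ V(v0), 1 ≤ s < ℓ. Then for every v0 ∈ V and 1 ≤ s < ℓ, the aggregated inequality Σ_{v∈V\V(v0)} x(v,s) ≤ Σ_{v∈V\V(v0)} x(v,s+1) holds. -/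
/-!
Let `S` be the set of nodes reachable from `v0` (which contains `v0`). If no node of `S` is
active at step `s`, the left-hand side is `0`. Otherwise some `v' ∈ S` is active at step `s`;
every node outside `S` is unreachable from `v'`, so the pairwise constraints forbid it at step
`s + 1`, and the unit mass of step `s + 1` lies entirely in `S`.
-/

open Finset

theorem Finset.sum_filter_le_sum_filter_of_exclusive {ι : Type*} {V : Finset ι}
    (p : ι → Prop) [DecidablePred p] {a b : ι → ℤ}
    (ha : ∀ i ∈ V, 0 ≤ a i) (hb : ∀ i ∈ V, 0 ≤ b i)
    (hsa : ∑ i ∈ V, a i ≤ 1) (hsb : 1 ≤ ∑ i ∈ V, b i)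
    (hexcl : ∀ i ∈ V, p i → ∀ j ∈ V, ¬ p j → a i + b j ≤ 1) :
    ∑ i ∈ V.filter p, a i ≤ ∑ i ∈ V.filter p, b i := by
  have hb_in : 0 ≤ ∑ i ∈ V.filter p, b i :=
    sum_nonneg fun i hi => hb i (mem_filter.mp hi).1
  by_cases hactive : ∃ i ∈ V.filter p, 0 < a i
  · obtain ⟨i, hi, hai⟩ := hactive
    obtain ⟨hiV, hpi⟩ := mem_filter.mp hi
    have hb_out : ∑ j ∈ V.filter (¬ p ·), b j ≤ 0 := sum_nonpos fun j hj => by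
      obtain ⟨hjV, hpj⟩ := mem_filter.mp hj
      linarith [hexcl i hiV hpi j hjV hpj]
    have ha_in : ∑ i ∈ V.filter p, a i ≤ ∑ i ∈ V, a i :=
      sum_le_sum_of_subset_of_nonneg (filter_subset p V) fun i hi _ => ha i hi
    linarith [sum_filter_add_sum_filter_not V p b]
  · push Not at hactive
    linarith [sum_nonpos hactive]

theorem Relation.ReflTransGen.not_of_not_left {α : Type*} {r : α → α → Prop} {a b c : α}
    (hab : Relation.ReflTransGen r a b) (hac : ¬ Relation.ReflTransGen r a c) :
    ¬ Relation.ReflTransGen r b c :=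
  fun hbc => hac (hab.trans hbc)

/-- If a binary assignment `x` satisfies the assignment constraints and the pairwise
connectivity constraints `x(v0,s) + x(v,s+1) ≤ 1` for `v ∈ V(v0)`, then the aggregated
inequality `Σ_{v∈V∖V(v0)} x(v,s) ≤ Σ_{v∈V∖V(v0)} x(v,s+1)` holds for all `v0 ∈ V` and
`1 ≤ s < ℓ`. -/
theorem pairwise_implies_aggregated {I : Type*} [DecidableEq I] (L : I → I → Prop)
    [DecidableRel (Relation.ReflTransGen L)] (V : Finset I) (ℓ : ℕ) (x : I → ℕ → ℤ)
    (hbin : ∀ v ∈ V, ∀ s, x v s = 0 ∨ x v s = 1)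
    (hassign : ∀ s, 1 ≤ s → s ≤ ℓ → ∑ v ∈ V, x v s = 1)
    (hpair : ∀ v0 ∈ V, ∀ v ∈ V, v ≠ v0 → ¬ Relation.ReflTransGen L v0 v →
      ∀ s, 1 ≤ s → s < ℓ → x v0 s + x v (s + 1) ≤ 1) :
    ∀ v0 ∈ V, ∀ s, 1 ≤ s → s < ℓ →
      ∑ v ∈ V.filter (fun v => v = v0 ∨ Relation.ReflTransGen L v0 v), x v s
        ≤ ∑ v ∈ V.filter (fun v => v = v0 ∨ Relation.ReflTransGen L v0 v), x v (s + 1) := by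
  intro v0 _ s hs hsℓ
  have hnonneg : ∀ t, ∀ v ∈ V, 0 ≤ x v t := fun t v hv => by
    rcases hbin v hv t with h | h <;> simp [h]
  have hreach : ∀ v, (v = v0 ∨ Relation.ReflTransGen L v0 v) ↔ Relation.ReflTransGen L v0 v :=
    fun v => ⟨fun h => h.elim (· ▸ .refl) id, Or.inr⟩
  refine sum_filter_le_sum_filter_of_exclusive _ (hnonneg s) (hnonneg (s + 1))
    (hassign s hs hsℓ.le).le (hassign (s + 1) (by omega) hsℓ).ge ?_
  intro v' hv' hv'S v hv hvS
  rw [hreach] at hv'S hvS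
  exact hpair v' hv' v hv (fun h => hvS (h ▸ hv'S)) (hv'S.not_of_not_left hvS) s hs hsℓ
end

section
/- Let x : V × {1,…,ℓ} → {0,1} satisfy Σ_{v∈V} x(v,s) = 1 for all s, the source constraints x(v,1) = 0 for all v ∈ V(S), and the pairwise connectivity constraints x(v0,s) + x(v,s+1) ≤ 1 for all v0 ∈ V, v ∈ V(v0), 1 ≤ s < ℓ. Then x(v,s) = 0 for all v ∈ V(S) and all s ∈ {1,…,ℓ}. -/
/-! Induction on the step `s`. At each step exactly one cloud node `v0` is chosen, and by the
induction hypothesis it is reachable from `S`. A node unreachable from `S` is then unreachable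
from `v0` too, since otherwise it would be reachable from `S` through `v0`; so the pairwise
connectivity constraint for `v0` forbids it at step `s + 1`. -/

theorem Finset.exists_eq_one_of_sum_eq_one {ι : Type*} {s : Finset ι} {f : ι → ℤ}
    (hf : ∀ i ∈ s, f i = 0 ∨ f i = 1) (hsum : ∑ i ∈ s, f i = 1) : ∃ i ∈ s, f i = 1 := by
  by_contra! h
  have hzero : ∑ i ∈ s, f i = 0 :=
    Finset.sum_eq_zero fun i hi => (hf i hi).resolve_right (h i hi)
  omega

section

open Relation

variable {I : Type*} {L : I → I → Prop} {S : I} {V : Finset I} {x : I → ℕ → ℤ} {s : ℕ}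

theorem exists_reachable_eq_one (hbin : ∀ v ∈ V, x v s = 0 ∨ x v s = 1)
    (hassign : ∑ v ∈ V, x v s = 1) (hzero : ∀ v ∈ V, ¬ ReflTransGen L S v → x v s = 0) :
    ∃ v0 ∈ V, ReflTransGen L S v0 ∧ x v0 s = 1 := by
  obtain ⟨v0, hv0, hx⟩ := Finset.exists_eq_one_of_sum_eq_one hbin hassign
  refine ⟨v0, hv0, by_contra fun hnr => ?_, hx⟩
  simp [hzero v0 hv0 hnr] at hx

theorem unreachable_eq_zero_succ (hbin : ∀ v ∈ V, ∀ s, x v s = 0 ∨ x v s = 1)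
    (hassign : ∑ v ∈ V, x v s = 1)
    (hpair : ∀ v0 ∈ V, ∀ v ∈ V, v ≠ v0 → ¬ ReflTransGen L v0 v → x v0 s + x v (s + 1) ≤ 1)
    (hzero : ∀ v ∈ V, ¬ ReflTransGen L S v → x v s = 0) :
    ∀ v ∈ V, ¬ ReflTransGen L S v → x v (s + 1) = 0 := by
  intro v hv hnr
  obtain ⟨v0, hv0, hreach, hx0⟩ :=
    exists_reachable_eq_one (fun v hv => hbin v hv s) hassign hzero
  have hne : v ≠ v0 := by rintro rfl; exact hnr hreach
  have hle := hpair v0 hv0 v hv hne fun h => hnr (hreach.trans h)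
  rcases hbin v hv (s + 1) with h | h <;> omega

end

theorem source_zero_propagates_general {I : Type*} (L : I → I → Prop) (S : I)
    (V : Finset I) (ℓ : ℕ) (x : I → ℕ → ℤ)
    (hbin : ∀ v ∈ V, ∀ s, x v s = 0 ∨ x v s = 1)
    (hassign : ∀ s, 1 ≤ s → s ≤ ℓ → ∑ v ∈ V, x v s = 1)
    (hsrc : ∀ v ∈ V, ¬ Relation.ReflTransGen L S v → x v 1 = 0)
    (hpair : ∀ v0 ∈ V, ∀ v ∈ V, v ≠ v0 → ¬ Relation.ReflTransGen L v0 v →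
      ∀ s, 1 ≤ s → s < ℓ → x v0 s + x v (s + 1) ≤ 1) :
    ∀ v ∈ V, ¬ Relation.ReflTransGen L S v → ∀ s, 1 ≤ s → s ≤ ℓ → x v s = 0 := by
  intro v hv hnr s hs hsℓ
  induction s, hs using Nat.le_induction generalizing v with
  | base => exact hsrc v hv hnr
  | succ s hs ih =>
    exact unreachable_eq_zero_succ hbin (hassign s hs (by omega))
      (fun v0 hv0 w hw hne hnr' => hpair v0 hv0 w hw hne hnr' s hs (by omega))
      (fun w hw hnr' => ih w hw hnr' (by omega)) v hv hnr

/-- If `x` satisfies the assignment constraints, the source constraints `x(v,1) = 0` for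
all `v ∈ V(S)`, and the pairwise connectivity constraints, then `x(v,s) = 0` for all
`v ∈ V(S)` and all `s ∈ {1,…,ℓ}`. -/
theorem source_zero_propagates {I : Type*} [DecidableEq I] (L : I → I → Prop) (S : I)
    (V : Finset I) (ℓ : ℕ) (x : I → ℕ → ℤ)
    (hbin : ∀ v ∈ V, ∀ s, x v s = 0 ∨ x v s = 1)
    (hassign : ∀ s, 1 ≤ s → s ≤ ℓ → ∑ v ∈ V, x v s = 1)
    (hsrc : ∀ v ∈ V, ¬ Relation.ReflTransGen L S v → x v 1 = 0)
    (hpair : ∀ v0 ∈ V, ∀ v ∈ V, v ≠ v0 → ¬ Relation.ReflTransGen L v0 v →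
      ∀ s, 1 ≤ s → s < ℓ → x v0 s + x v (s + 1) ≤ 1) :
    ∀ v ∈ V, ¬ Relation.ReflTransGen L S v → ∀ s, 1 ≤ s → s ≤ ℓ → x v s = 0 :=
  source_zero_propagates_general L S V ℓ x hbin hassign hsrc hpair
end

section
/- Let x : V × {1,…,ℓ} → {0,1} satisfy Σ_{v∈V} x(v,s) = 1 for all s, the destination constraints x(v,ℓ) = 0 for all v ∈ V(D), and the pairwise connectivity constraints x(v0,s) + x(v,s+1) ≤ 1 for all v0 ∈ V, v ∈ V(v0), 1 ≤ s < ℓ. Then x(v,s) = 0 for all v ∈ V(D) and all s ∈ {1,…,ℓ}. -/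
/-!
Backward induction on the step `s`, starting from the destination constraints at `s = ℓ`.
If some `v` from which `D` is unreachable had `x v s = 1` with `s < ℓ`, the unique node `w`
chosen at step `s + 1` could reach `D`, by induction; then `v` cannot reach `w` (else it would
reach `D` through `w`), so the pairwise constraint `x v s + x w (s + 1) ≤ 1` is violated.
-/

open Relation

theorem Finset.exists_mem_eq_one_of_sum_eq_one {ι : Type*} {s : Finset ι} {f : ι → ℤ}
    (hbin : ∀ i ∈ s, f i = 0 ∨ f i = 1) (hsum : ∑ i ∈ s, f i = 1) : ∃ i ∈ s, f i = 1 := by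
  obtain ⟨i, hi, hne⟩ := Finset.exists_ne_zero_of_sum_ne_zero (hsum ▸ one_ne_zero)
  exact ⟨i, hi, (hbin i hi).resolve_left hne⟩

theorem zero_on_unreachable_of_succ {I : Type*} {L : I → I → Prop} {D : I} {V : Finset I}
    {x : I → ℕ → ℤ} {s : ℕ}
    (hbin : ∀ v ∈ V, ∀ s, x v s = 0 ∨ x v s = 1)
    (hassign : ∑ v ∈ V, x v (s + 1) = 1)
    (hpair : ∀ v0 ∈ V, ∀ v ∈ V, v ≠ v0 → ¬ ReflTransGen L v0 v → x v0 s + x v (s + 1) ≤ 1)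
    (hnext : ∀ w ∈ V, ¬ ReflTransGen L w D → x w (s + 1) = 0) :
    ∀ v ∈ V, ¬ ReflTransGen L v D → x v s = 0 := by
  intro v hv hvD
  obtain ⟨w, hw, hw1⟩ :=
    Finset.exists_mem_eq_one_of_sum_eq_one (fun w hw => hbin w hw (s + 1)) hassign
  have hwD : ReflTransGen L w D := by
    by_contra hwD
    simp [hnext w hw hwD] at hw1
  have hvw : ¬ ReflTransGen L v w := fun h => hvD (h.trans hwD)
  have hwv : w ≠ v := fun h => hvw (h ▸ ReflTransGen.refl)
  have := hpair v hv w hw hwv hvw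
  rcases hbin v hv s with h | h <;> omega

theorem destination_zero_propagates_general {I : Type*} (L : I → I → Prop) (D : I)
    (V : Finset I) (ℓ : ℕ) (x : I → ℕ → ℤ)
    (hbin : ∀ v ∈ V, ∀ s, x v s = 0 ∨ x v s = 1)
    (hassign : ∀ s, 1 ≤ s → s ≤ ℓ → ∑ v ∈ V, x v s = 1)
    (hdst : ∀ v ∈ V, ¬ Relation.ReflTransGen L v D → x v ℓ = 0)
    (hpair : ∀ v0 ∈ V, ∀ v ∈ V, v ≠ v0 → ¬ Relation.ReflTransGen L v0 v →
      ∀ s, 1 ≤ s → s < ℓ → x v0 s + x v (s + 1) ≤ 1) :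
    ∀ v ∈ V, ¬ Relation.ReflTransGen L v D → ∀ s, 1 ≤ s → s ≤ ℓ → x v s = 0 := by
  intro v hv hvD s hs hsℓ
  revert v
  refine Nat.decreasingInduction' (fun k hkℓ hk hnext => ?_) hsℓ hdst
  exact zero_on_unreachable_of_succ hbin (hassign (k + 1) (by omega) hkℓ)
    (fun v0 hv0 v hv hne h => hpair v0 hv0 v hv hne h k (hs.trans hk) hkℓ) hnext

/-- If `x` satisfies the assignment constraints, the destination constraints `x(v,ℓ) = 0`
for all `v ∈ V(D)` (nodes from which `D` is unreachable), and the pairwise connectivity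
constraints, then `x(v,s) = 0` for all `v ∈ V(D)` and all `s ∈ {1,…,ℓ}`. -/
theorem destination_zero_propagates {I : Type*} [DecidableEq I] (L : I → I → Prop) (D : I)
    (V : Finset I) (ℓ : ℕ) (hℓ : 1 ≤ ℓ) (x : I → ℕ → ℤ)
    (hbin : ∀ v ∈ V, ∀ s, x v s = 0 ∨ x v s = 1)
    (hassign : ∀ s, 1 ≤ s → s ≤ ℓ → ∑ v ∈ V, x v s = 1)
    (hdst : ∀ v ∈ V, ¬ Relation.ReflTransGen L v D → x v ℓ = 0)
    (hpair : ∀ v0 ∈ V, ∀ v ∈ V, v ≠ v0 → ¬ Relation.ReflTransGen L v0 v →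
      ∀ s, 1 ≤ s → s < ℓ → x v0 s + x v (s + 1) ≤ 1) :
    ∀ v ∈ V, ¬ Relation.ReflTransGen L v D → ∀ s, 1 ≤ s → s ≤ ℓ → x v s = 0 :=
  destination_zero_propagates_general L D V ℓ x hbin hassign hdst hpair
end

section
/- (Theorem 1(i)) The three 0-1 sets X^1, X^2, X^3 coincide, where X^1 is defined by the assignment constraints together with inequalities (source: x(v,1)=0 for v ∈ V(S); destination: x(v,ℓ)=0 for v ∈ V(D); adjacent pairs: x(v0,s)+x(v,s+1) ≤ 1 for v ∈ V(v0)), X^2 by the assignment constraints together with (x(v,s)=0 for v ∈ V(S) ∪ V(D), all s; all non-adjacent pairs: x(v0,s)+x(v,s0) ≤ 1 for v ∈ V(v0) and s < s0), and X^3 by the assignment constraints together with (x(v,s)=0 for v ∈ V(S) ∪ V(D), all s; aggregated: Σ_{v∈V\V(v0)} x(v,s) ≤ Σ_{v∈V\V(v0)} x(v,s+1) for all v0 ∈ V, s < ℓ). -/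
/-!
Under the assignment constraints a 0-1 solution `x` is the incidence vector of a sequence
`p 1, …, p ℓ` of cloud nodes: `x v s = 1` exactly when `v = p s`. Each family of inequalities then
becomes a statement about reachability `⇝` along this sequence:
* `X¹`: `S ⇝ p 1`, `p ℓ ⇝ D` and `p s ⇝ p (s + 1)`;
* `X²`: `S ⇝ p s ⇝ D` for every `s`, and `p s ⇝ p s₀` for `s < s₀`;
* `X³`: `S ⇝ p s ⇝ D` for every `s`, and `p s ⇝ p (s + 1)`, since the aggregated inequality for
  `v0 = p s` says that the sequence cannot leave the set of nodes reachable from `p s`.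
By transitivity of reachability the three statements are equivalent.
-/

open Finset

theorem Nat.rel_of_forall_rel_succ_of_le_of_le_of_le {β : Type*} (r : β → β → Prop) [Std.Refl r]
    [IsTrans β r] {f : ℕ → β} {a c : ℕ} (h : ∀ n, a ≤ n → n < c → r (f n) (f (n + 1)))
    ⦃b d : ℕ⦄ (hab : a ≤ b) (hbd : b ≤ d) (hdc : d ≤ c) : r (f b) (f d) := by
  induction d, hbd using Nat.le_induction with
  | base => exact refl _
  | succ d hbd ih => exact _root_.trans (ih (by omega)) (h d (by omega) (by omega))

section Chain

variable {α : Type*} (R : α → α → Prop) [Std.Refl R] [IsTrans α R] {p : ℕ → α} {ℓ : ℕ}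

theorem forall_rel_of_lt_iff_forall_rel_succ :
    (∀ s s0, 1 ≤ s → s < s0 → s0 ≤ ℓ → R (p s) (p s0)) ↔
      ∀ s, 1 ≤ s → s < ℓ → R (p s) (p (s + 1)) :=
  ⟨fun h s h1 h2 => h s (s + 1) h1 (lt_add_one s) h2,
    fun h _ _ h1 h2 h3 => Nat.rel_of_forall_rel_succ_of_le_of_le_of_le R h h1 h2.le h3⟩

theorem rel_ends_and_forall_rel_succ_iff (hℓ : 1 ≤ ℓ) (S D : α) :
    (R S (p 1) ∧ R (p ℓ) D ∧ ∀ s, 1 ≤ s → s < ℓ → R (p s) (p (s + 1))) ↔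
      (∀ s, 1 ≤ s → s ≤ ℓ → R S (p s) ∧ R (p s) D) ∧
        ∀ s, 1 ≤ s → s < ℓ → R (p s) (p (s + 1)) := by
  constructor
  · rintro ⟨hS, hD, hsucc⟩
    refine ⟨fun s h1 h2 => ⟨?_, ?_⟩, hsucc⟩
    · exact _root_.trans hS (Nat.rel_of_forall_rel_succ_of_le_of_le_of_le R hsucc le_rfl h1 h2)
    · exact _root_.trans (Nat.rel_of_forall_rel_succ_of_le_of_le_of_le R hsucc h1 h2 le_rfl) hD
  · rintro ⟨hSD, hsucc⟩
    exact ⟨(hSD 1 le_rfl hℓ).1, (hSD ℓ hℓ le_rfl).2, hsucc⟩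

end Chain

section Indicator

variable {I : Type*} [DecidableEq I] {V : Finset I} {y z : I → ℤ} {u w : I}

def IsIndicatorOn (V : Finset I) (y : I → ℤ) (u : I) : Prop :=
  u ∈ V ∧ ∀ v ∈ V, y v = if v = u then 1 else 0

theorem exists_isIndicatorOn (hb : ∀ v ∈ V, y v = 0 ∨ y v = 1) (hs : ∑ v ∈ V, y v = 1) :
    ∃ u, IsIndicatorOn V y u := by
  have hcard : #(V.filter (y · = 1)) = 1 := by
    have hy : ∑ v ∈ V, y v = ∑ v ∈ V, if y v = 1 then (1 : ℤ) else 0 :=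
      sum_congr rfl fun v hv => by rcases hb v hv with h | h <;> simp [h]
    rw [hy, sum_boole] at hs
    exact_mod_cast hs
  obtain ⟨u, hu⟩ := card_eq_one.mp hcard
  have hone : ∀ v, v ∈ V ∧ y v = 1 ↔ v = u := fun v => by
    rw [← mem_singleton (a := u), ← hu, mem_filter]
  refine ⟨u, ((hone u).2 rfl).1, fun v hv => ?_⟩
  split_ifs with hvu
  · exact ((hone v).2 hvu).2
  · exact (hb v hv).resolve_right fun h => hvu ((hone v).1 ⟨hv, h⟩)

namespace IsIndicatorOn

theorem sum_filter (hy : IsIndicatorOn V y u) (P : I → Prop) [DecidablePred P] :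
    ∑ v ∈ V.filter P, y v = if P u then 1 else 0 := by
  rw [sum_congr rfl fun v hv => hy.2 v (mem_filter.1 hv).1, sum_ite_eq']
  simp only [mem_filter, hy.1, true_and]

theorem forall_eq_zero_iff (hy : IsIndicatorOn V y u) (P : I → Prop) :
    (∀ v ∈ V, ¬ P v → y v = 0) ↔ P u := by
  refine ⟨fun h => by_contra fun hu => ?_, fun hu v hv hv' => ?_⟩
  · simpa [hy.2 u hy.1] using h u hy.1 hu
  · rw [hy.2 v hv, if_neg (by rintro rfl; exact hv' hu)]

theorem forall_add_le_one_iff (hy : IsIndicatorOn V y u) (hz : IsIndicatorOn V z w)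
    (R : I → I → Prop) [Std.Refl R] :
    (∀ v0 ∈ V, ∀ v ∈ V, v ≠ v0 → ¬ R v0 v → y v0 + z v ≤ 1) ↔ R u w := by
  refine ⟨fun h => by_contra fun huw => ?_, fun huw v0 hv0 v hv _ hR => ?_⟩
  · have h2 := h u hy.1 w hz.1 (by rintro rfl; exact huw (refl _)) huw
    simp [hy.2 u hy.1, hz.2 w hz.1] at h2
  · rw [hy.2 v0 hv0, hz.2 v hv]
    split_ifs with h0 h1
    · subst h0 h1
      exact absurd huw hR
    all_goals norm_num

theorem forall_sum_filter_le_iff (hy : IsIndicatorOn V y u) (hz : IsIndicatorOn V z w)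
    (R : I → I → Prop) [DecidableRel R] [Std.Refl R] [IsTrans I R] :
    (∀ v0 ∈ V, ∑ v ∈ V.filter (fun v => v = v0 ∨ R v0 v), y v
        ≤ ∑ v ∈ V.filter (fun v => v = v0 ∨ R v0 v), z v) ↔ R u w := by
  simp only [hy.sum_filter, hz.sum_filter]
  refine ⟨fun h => ?_, fun huw v0 _ => ?_⟩
  · have h2 := h u hy.1
    rw [if_pos (Or.inl rfl)] at h2
    split_ifs at h2 with hw
    · rcases hw with rfl | hw
      exacts [refl _, hw]
    · norm_num at h2
  · split_ifs with hu hw hw <;> norm_num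
    refine hw (Or.inr (_root_.trans ?_ huw))
    rcases hu with rfl | hu
    exacts [refl _, hu]

end IsIndicatorOn

end Indicator

section Path

variable {I : Type*} [DecidableEq I] {V : Finset I} {ℓ : ℕ} {x : I → ℕ → ℤ} {p : ℕ → I}

def IsIndicatorPath (V : Finset I) (ℓ : ℕ) (x : I → ℕ → ℤ) (p : ℕ → I) : Prop :=
  ∀ s, 1 ≤ s → s ≤ ℓ → IsIndicatorOn V (fun v => x v s) (p s)

theorem exists_isIndicatorPath (hℓ : 1 ≤ ℓ) (hb : ∀ v ∈ V, ∀ s, x v s = 0 ∨ x v s = 1)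
    (hsum : ∀ s, 1 ≤ s → s ≤ ℓ → ∑ v ∈ V, x v s = 1) : ∃ p, IsIndicatorPath V ℓ x p := by
  have h (s : ℕ) (hs : 1 ≤ s ∧ s ≤ ℓ) : ∃ u, IsIndicatorOn V (fun v => x v s) u :=
    exists_isIndicatorOn (fun v hv => hb v hv s) (hsum s hs.1 hs.2)
  obtain ⟨u, -⟩ := h 1 ⟨le_rfl, hℓ⟩
  have : Nonempty I := ⟨u⟩
  choose! p hp using h
  exact ⟨p, fun s h1 h2 => hp s ⟨h1, h2⟩⟩

namespace IsIndicatorPath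

variable (R : I → I → Prop) (S D : I)

theorem simple_constraints_iff (hp : IsIndicatorPath V ℓ x p) (hℓ : 1 ≤ ℓ) [Std.Refl R] :
    ((∀ v ∈ V, ¬ R S v → x v 1 = 0) ∧ (∀ v ∈ V, ¬ R v D → x v ℓ = 0) ∧
      (∀ v0 ∈ V, ∀ v ∈ V, v ≠ v0 → ¬ R v0 v →
        ∀ s, 1 ≤ s → s < ℓ → x v0 s + x v (s + 1) ≤ 1)) ↔
      R S (p 1) ∧ R (p ℓ) D ∧ ∀ s, 1 ≤ s → s < ℓ → R (p s) (p (s + 1)) := by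
  refine and_congr ((hp 1 le_rfl hℓ).forall_eq_zero_iff (R S))
    (and_congr ((hp ℓ hℓ le_rfl).forall_eq_zero_iff (R · D)) ⟨fun h s h1 h2 => ?_, ?_⟩)
  · exact ((hp s h1 h2.le).forall_add_le_one_iff (hp (s + 1) (by omega) h2) R).1
      fun v0 hv0 v hv hne hR => h v0 hv0 v hv hne hR s h1 h2
  · intro h v0 hv0 v hv hne hR s h1 h2
    exact ((hp s h1 h2.le).forall_add_le_one_iff (hp (s + 1) (by omega) h2) R).2
      (h s h1 h2) v0 hv0 v hv hne hR

theorem zero_constraints_iff (hp : IsIndicatorPath V ℓ x p) :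
    (∀ v ∈ V, (¬ R S v ∨ ¬ R v D) → ∀ s, 1 ≤ s → s ≤ ℓ → x v s = 0) ↔
      ∀ s, 1 ≤ s → s ≤ ℓ → R S (p s) ∧ R (p s) D := by
  have hzero (s h1 h2) := (hp s h1 h2).forall_eq_zero_iff (fun v => R S v ∧ R v D)
  refine ⟨fun h s h1 h2 => (hzero s h1 h2).1 fun v hv hSD => ?_, fun h v hv hSD s h1 h2 => ?_⟩
  · exact h v hv (not_and_or.1 hSD) s h1 h2
  · exact (hzero s h1 h2).2 (h s h1 h2) v hv (not_and_or.2 hSD)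

theorem extended_constraints_iff (hp : IsIndicatorPath V ℓ x p) [Std.Refl R] :
    ((∀ v ∈ V, (¬ R S v ∨ ¬ R v D) → ∀ s, 1 ≤ s → s ≤ ℓ → x v s = 0) ∧
      (∀ v0 ∈ V, ∀ v ∈ V, v ≠ v0 → ¬ R v0 v →
        ∀ s s0, 1 ≤ s → s < s0 → s0 ≤ ℓ → x v0 s + x v s0 ≤ 1)) ↔
      (∀ s, 1 ≤ s → s ≤ ℓ → R S (p s) ∧ R (p s) D) ∧
        ∀ s s0, 1 ≤ s → s < s0 → s0 ≤ ℓ → R (p s) (p s0) := by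
  refine and_congr (hp.zero_constraints_iff R S D) ⟨fun h s s0 h1 h2 h3 => ?_, ?_⟩
  · exact ((hp s h1 (by omega)).forall_add_le_one_iff (hp s0 (by omega) h3) R).1
      fun v0 hv0 v hv hne hR => h v0 hv0 v hv hne hR s s0 h1 h2 h3
  · intro h v0 hv0 v hv hne hR s s0 h1 h2 h3
    exact ((hp s h1 (by omega)).forall_add_le_one_iff (hp s0 (by omega) h3) R).2
      (h s s0 h1 h2 h3) v0 hv0 v hv hne hR

theorem aggregated_constraints_iff (hp : IsIndicatorPath V ℓ x p) [DecidableRel R] [Std.Refl R]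
    [IsTrans I R] :
    ((∀ v ∈ V, (¬ R S v ∨ ¬ R v D) → ∀ s, 1 ≤ s → s ≤ ℓ → x v s = 0) ∧
      (∀ v0 ∈ V, ∀ s, 1 ≤ s → s < ℓ →
        ∑ v ∈ V.filter (fun v => v = v0 ∨ R v0 v), x v s
          ≤ ∑ v ∈ V.filter (fun v => v = v0 ∨ R v0 v), x v (s + 1))) ↔
      (∀ s, 1 ≤ s → s ≤ ℓ → R S (p s) ∧ R (p s) D) ∧
        ∀ s, 1 ≤ s → s < ℓ → R (p s) (p (s + 1)) := by
  refine and_congr (hp.zero_constraints_iff R S D) ⟨fun h s h1 h2 => ?_, ?_⟩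
  · exact ((hp s h1 h2.le).forall_sum_filter_le_iff (hp (s + 1) (by omega) h2) R).1
      fun v0 hv0 => h v0 hv0 s h1 h2
  · intro h v0 hv0 s h1 h2
    exact ((hp s h1 h2.le).forall_sum_filter_le_iff (hp (s + 1) (by omega) h2) R).2
      (h s h1 h2) v0 hv0

end IsIndicatorPath

end Path

/-- Theorem 1(i): the three 0-1 sets `X¹`, `X²`, `X³` coincide, where `X¹` uses the simple
connectivity inequalities, `X²` the extended ones, and `X³` the zero constraints together
with the aggregated inequalities. -/
theorem three_formulations_coincide {I : Type*} [DecidableEq I] (L : I → I → Prop)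
    [DecidableRel (Relation.ReflTransGen L)] (S D : I) (V : Finset I) (ℓ : ℕ)
    (hℓ : 1 ≤ ℓ) :
    ({x : I → ℕ → ℤ |
        (∀ v ∈ V, ∀ s, x v s = 0 ∨ x v s = 1) ∧
        (∀ s, 1 ≤ s → s ≤ ℓ → ∑ v ∈ V, x v s = 1) ∧
        (∀ v ∈ V, ¬ Relation.ReflTransGen L S v → x v 1 = 0) ∧
        (∀ v ∈ V, ¬ Relation.ReflTransGen L v D → x v ℓ = 0) ∧
        (∀ v0 ∈ V, ∀ v ∈ V, v ≠ v0 → ¬ Relation.ReflTransGen L v0 v →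
          ∀ s, 1 ≤ s → s < ℓ → x v0 s + x v (s + 1) ≤ 1)} =
      {x : I → ℕ → ℤ |
        (∀ v ∈ V, ∀ s, x v s = 0 ∨ x v s = 1) ∧
        (∀ s, 1 ≤ s → s ≤ ℓ → ∑ v ∈ V, x v s = 1) ∧
        (∀ v ∈ V, (¬ Relation.ReflTransGen L S v ∨ ¬ Relation.ReflTransGen L v D) →
          ∀ s, 1 ≤ s → s ≤ ℓ → x v s = 0) ∧
        (∀ v0 ∈ V, ∀ v ∈ V, v ≠ v0 → ¬ Relation.ReflTransGen L v0 v →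
          ∀ s s0, 1 ≤ s → s < s0 → s0 ≤ ℓ → x v0 s + x v s0 ≤ 1)}) ∧
    ({x : I → ℕ → ℤ |
        (∀ v ∈ V, ∀ s, x v s = 0 ∨ x v s = 1) ∧
        (∀ s, 1 ≤ s → s ≤ ℓ → ∑ v ∈ V, x v s = 1) ∧
        (∀ v ∈ V, (¬ Relation.ReflTransGen L S v ∨ ¬ Relation.ReflTransGen L v D) →
          ∀ s, 1 ≤ s → s ≤ ℓ → x v s = 0) ∧
        (∀ v0 ∈ V, ∀ v ∈ V, v ≠ v0 → ¬ Relation.ReflTransGen L v0 v →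
          ∀ s s0, 1 ≤ s → s < s0 → s0 ≤ ℓ → x v0 s + x v s0 ≤ 1)} =
      {x : I → ℕ → ℤ |
        (∀ v ∈ V, ∀ s, x v s = 0 ∨ x v s = 1) ∧
        (∀ s, 1 ≤ s → s ≤ ℓ → ∑ v ∈ V, x v s = 1) ∧
        (∀ v ∈ V, (¬ Relation.ReflTransGen L S v ∨ ¬ Relation.ReflTransGen L v D) →
          ∀ s, 1 ≤ s → s ≤ ℓ → x v s = 0) ∧
        (∀ v0 ∈ V, ∀ s, 1 ≤ s → s < ℓ →
          ∑ v ∈ V.filter (fun v => v = v0 ∨ Relation.ReflTransGen L v0 v), x v s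
            ≤ ∑ v ∈ V.filter (fun v => v = v0 ∨ Relation.ReflTransGen L v0 v), x v (s + 1))}) := by
  refine ⟨Set.ext fun x => and_congr_right fun hb => and_congr_right fun hsum => ?_,
    Set.ext fun x => and_congr_right fun hb => and_congr_right fun hsum => ?_⟩ <;>
  obtain ⟨p, hp⟩ := exists_isIndicatorPath hℓ hb hsum
  · rw [hp.simple_constraints_iff _ S D hℓ, rel_ends_and_forall_rel_succ_iff _ hℓ,
      hp.extended_constraints_iff _ S D, forall_rel_of_lt_iff_forall_rel_succ]
  · rw [hp.extended_constraints_iff _ S D, hp.aggregated_constraints_iff _ S D,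
      forall_rel_of_lt_iff_forall_rel_succ]
end

section
/- (Theorem 1(ii), inclusion X^3_L ⊆ X^2_L) If x : V × {1,…,ℓ} → [0,1] satisfies Σ_{v∈V} x(v,s) = 1 for all s and the aggregated inequalities Σ_{v∈V\V(v0)} x(v,s) ≤ Σ_{v∈V\V(v0)} x(v,s+1) for all v0 ∈ V and 1 ≤ s < ℓ, then it satisfies the pairwise inequalities x(v0,s) + Σ_{v∈V(v0)} x(v,s0) ≤ 1, and in particular x(v0,s) + x(v,s0) ≤ 1 for all v ∈ V(v0) and 1 ≤ s < s0 ≤ ℓ. -/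
/-!
The set of nodes reachable from `v0` (together with `v0`) carries a mass that, by the aggregated
inequalities, does not decrease from one step to the next, hence from step `s` to any later step
`s0`. At step `s` this mass is at least `x(v0,s)`; at step `s0` it is `1` minus the mass on the
unreachable nodes `V(v0)`.
-/

open Finset

theorem Finset.add_sum_filter_not_le_sum {ι M : Type*} [AddCommMonoid M] [PartialOrder M]
    [IsOrderedAddMonoid M] {s : Finset ι} {p : ι → Prop} [DecidablePred p] {f g : ι → M}
    (hf : ∀ i ∈ s, 0 ≤ f i) {a : ι} (ha : a ∈ s) (hpa : p a)
    (hfg : ∑ i ∈ s.filter p, f i ≤ ∑ i ∈ s.filter p, g i) :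
    f a + ∑ i ∈ s.filter (fun i => ¬ p i), g i ≤ ∑ i ∈ s, g i := by
  have hfa : f a ≤ ∑ i ∈ s.filter p, f i :=
    single_le_sum (fun i hi => hf i (mem_filter.1 hi).1) (mem_filter.2 ⟨ha, hpa⟩)
  rw [← sum_filter_add_sum_filter_not s p g]
  exact add_le_add_left (hfa.trans hfg) _

/-- Theorem 1(ii), inclusion `X³_L ⊆ X²_L`: if a fractional assignment `x ∈ [0,1]` satisfies
the assignment constraints and the aggregated inequalities, then for all `v0 ∈ V` and
`1 ≤ s < s0 ≤ ℓ` it satisfies `x(v0,s) + Σ_{v∈V(v0)} x(v,s0) ≤ 1`, and in particular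
`x(v0,s) + x(v,s0) ≤ 1` for all `v ∈ V(v0)`. -/
theorem fractional_aggregated_implies_pairwise {I : Type*} [DecidableEq I]
    (L : I → I → Prop) [DecidableRel (Relation.ReflTransGen L)] (V : Finset I) (ℓ : ℕ)
    (x : I → ℕ → ℝ)
    (hbox : ∀ v ∈ V, ∀ s, 0 ≤ x v s ∧ x v s ≤ 1)
    (hassign : ∀ s, 1 ≤ s → s ≤ ℓ → ∑ v ∈ V, x v s = 1)
    (hagg : ∀ v0 ∈ V, ∀ s, 1 ≤ s → s < ℓ →
      ∑ v ∈ V.filter (fun v => v = v0 ∨ Relation.ReflTransGen L v0 v), x v s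
        ≤ ∑ v ∈ V.filter (fun v => v = v0 ∨ Relation.ReflTransGen L v0 v), x v (s + 1)) :
    ∀ v0 ∈ V, ∀ s s0, 1 ≤ s → s < s0 → s0 ≤ ℓ →
      (x v0 s + ∑ v ∈ V.filter (fun v => v ≠ v0 ∧ ¬ Relation.ReflTransGen L v0 v), x v s0
          ≤ 1) ∧
      (∀ v ∈ V, v ≠ v0 → ¬ Relation.ReflTransGen L v0 v → x v0 s + x v s0 ≤ 1) := by
  intro v0 hv0 s s0 hs hss0 hs0ℓ
  set reach := fun v => v = v0 ∨ Relation.ReflTransGen L v0 v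
  set unreach := V.filter (fun v => v ≠ v0 ∧ ¬ Relation.ReflTransGen L v0 v)
  have hmono : MonotoneOn (fun t => ∑ v ∈ V.filter reach, x v t) (Set.Icc 1 ℓ) :=
    monotoneOn_of_le_add_one Set.ordConnected_Icc fun t _ ht ht' => hagg v0 hv0 t ht.1 ht'.2
  have hunreach : unreach = V.filter (fun v => ¬ reach v) :=
    filter_congr fun v _ => by simp only [reach, not_or]
  have hmain : x v0 s + ∑ v ∈ unreach, x v s0 ≤ 1 := by
    rw [hunreach, ← hassign s0 (by omega) hs0ℓ]
    exact add_sum_filter_not_le_sum (fun v hv => (hbox v hv s).1) hv0 (Or.inl rfl)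
      (hmono ⟨hs, by omega⟩ ⟨by omega, hs0ℓ⟩ hss0.le)
  refine ⟨hmain, fun v hv hne hnr => ?_⟩
  have hle : x v s0 ≤ ∑ w ∈ unreach, x w s0 :=
    single_le_sum (fun w hw => (hbox w (mem_filter.1 hw).1 s0).1) (mem_filter.2 ⟨hv, hne, hnr⟩)
  linarith
end

section
/- (Link-capacity valid inequality) Suppose, for each flow index (k,s) with s ∈ F^k ∪ {0} and each edge (i,j) of a directed graph, r_{ij}^{k,s} ≥ 0; the link-capacity constraint Σ_{(k,s)} λ_s^k r_{ij}^{k,s} ≤ C_{ij} holds at every edge; and at a fixed node v the flow conservation gives Σ_{j:(j,v)∈L} r_{jv}^{k,0} − Σ_{j:(v,j)∈L} r_{vj}^{k,0} = x_v^{k,1} and Σ_{j:(j,v)∈L} r_{jv}^{k,s} − Σ_{j:(v,j)∈L} r_{vj}^{k,s} = x_v^{k,s+1} − x_v^{k,s} for 1 ≤ s < ℓ_k, with x values in {0,1} and λ_s^k ≥ 0. Then Σ_k ( λ_0^k x_v^{k,1} + Σ_{1≤s<ℓ_k} λ_s^k max(x_v^{k,s+1} − x_v^{k,s}, 0) ) ≤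 Σ_{j:(j,v)∈L} C_{jv}. -/
/-!
Flow conservation at `v` writes each demand `x_v^{k,1}` and `x_v^{k,s+1} - x_v^{k,s}` as inflow
minus outflow of the flow `(k,s)`, so, outflow being nonnegative, its positive part is at most the
inflow. Weighting by `λ_s^k` and summing, the left side is bounded by the total weighted inflow
into `v`, which is the sum over the incoming links of their loads, each at most its capacity.
-/

open Finset

lemma max_le_of_sub_eq {a b d : ℝ} (h : a - b = d) (ha : 0 ≤ a) (hb : 0 ≤ b) : max d 0 ≤ a :=
  max_le (h ▸ sub_le_self a hb) ha

lemma weighted_chain_sum_le {ℓ : ℕ} {w f g : ℕ → ℝ} {c : ℝ} (hw : ∀ s, 0 ≤ w s)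
    (hf : ∀ s, 0 ≤ f s) (hc : c ≤ f 0) (hg : ∀ s ∈ Ico 1 ℓ, g s ≤ f s) :
    w 0 * c + ∑ s ∈ Ico 1 ℓ, w s * g s ≤ ∑ s ∈ range (ℓ + 1), w s * f s := by
  rw [range_eq_Ico, sum_eq_sum_Ico_succ_bot (Nat.succ_pos ℓ)]
  gcongr ?_ + ?_
  · exact mul_le_mul_of_nonneg_left hc (hw 0)
  · calc ∑ s ∈ Ico 1 ℓ, w s * g s ≤ ∑ s ∈ Ico 1 ℓ, w s * f s :=
          sum_le_sum fun s hs => mul_le_mul_of_nonneg_left (hg s hs) (hw s)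
      _ ≤ ∑ s ∈ Ico 1 (ℓ + 1), w s * f s :=
          sum_le_sum_of_subset_of_nonneg (Ico_subset_Ico_right ℓ.le_succ)
            fun s _ _ => mul_nonneg (hw s) (hf s)

lemma sum_weighted_sum_le {ι K α : Type*} [Fintype K] {T : Finset ι} {S : K → Finset α}
    {w : K → α → ℝ} {f : ι → K → α → ℝ} {C : ι → ℝ}
    (hcap : ∀ j ∈ T, ∑ k, ∑ s ∈ S k, w k s * f j k s ≤ C j) :
    ∑ k, ∑ s ∈ S k, w k s * ∑ j ∈ T, f j k s ≤ ∑ j ∈ T, C j := by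
  simp_rw [mul_sum]
  rw [sum_congr rfl fun k _ => sum_comm, sum_comm]
  exact sum_le_sum hcap

theorem link_capacity_valid_inequality_general {I K : Type*} [Fintype I] [DecidableEq I] [Fintype K]
    (L : Finset (I × I)) (C : I × I → ℝ) (ℓ : K → ℕ) (lam : K → ℕ → ℝ)
    (x : I → K → ℕ → ℝ) (r : I × I → K → ℕ → ℝ) (v : I)
    (hlam : ∀ k s, 0 ≤ lam k s)
    (hr : ∀ e ∈ L, ∀ k s, 0 ≤ r e k s)
    (hcap : ∀ e ∈ L, ∑ k, ∑ s ∈ Finset.range (ℓ k + 1), lam k s * r e k s ≤ C e)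
    (hcons0 : ∀ k, (∑ j ∈ Finset.univ.filter (fun j => (j, v) ∈ L), r (j, v) k 0)
      - ∑ j ∈ Finset.univ.filter (fun j => (v, j) ∈ L), r (v, j) k 0 = x v k 1)
    (hcons : ∀ k, ∀ s, 1 ≤ s → s < ℓ k →
      (∑ j ∈ Finset.univ.filter (fun j => (j, v) ∈ L), r (j, v) k s)
      - ∑ j ∈ Finset.univ.filter (fun j => (v, j) ∈ L), r (v, j) k s
      = x v k (s + 1) - x v k s) :
    ∑ k, (lam k 0 * x v k 1
        + ∑ s ∈ Finset.Ico 1 (ℓ k), lam k s * max (x v k (s + 1) - x v k s) 0)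
      ≤ ∑ j ∈ Finset.univ.filter (fun j => (j, v) ∈ L), C (j, v) := by
  set In := univ.filter fun j => (j, v) ∈ L
  set Out := univ.filter fun j => (v, j) ∈ L
  have hIn : ∀ k s, 0 ≤ ∑ j ∈ In, r (j, v) k s :=
    fun k s => sum_nonneg fun j hj => hr _ (mem_filter.1 hj).2 k s
  have hOut : ∀ k s, 0 ≤ ∑ j ∈ Out, r (v, j) k s :=
    fun k s => sum_nonneg fun j hj => hr _ (mem_filter.1 hj).2 k s
  calc _ ≤ ∑ k, ∑ s ∈ range (ℓ k + 1), lam k s * ∑ j ∈ In, r (j, v) k s := by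
        refine sum_le_sum fun k _ => weighted_chain_sum_le (hlam k) (hIn k) ?_ fun s hs => ?_
        · exact hcons0 k ▸ sub_le_self _ (hOut k 0)
        · obtain ⟨hs₁, hsℓ⟩ := mem_Ico.1 hs
          exact max_le_of_sub_eq (hcons k s hs₁ hsℓ) (hIn k s) (hOut k s)
    _ ≤ ∑ j ∈ In, C (j, v) := sum_weighted_sum_le fun j hj => hcap _ (mem_filter.1 hj).2

/-- Link-capacity valid inequality: under nonnegativity, link capacity, and flow
conservation at node `v`, one has
`Σ_k (λ₀ᵏ x_v^{k,1} + Σ_{1≤s<ℓ_k} λ_sᵏ (x_v^{k,s+1} − x_v^{k,s})⁺) ≤ Σ_{j:(j,v)∈L} C_{jv}`. -/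
theorem link_capacity_valid_inequality {I K : Type*} [Fintype I] [DecidableEq I] [Fintype K]
    (L : Finset (I × I)) (C : I × I → ℝ) (ℓ : K → ℕ) (lam : K → ℕ → ℝ)
    (x : I → K → ℕ → ℝ) (r : I × I → K → ℕ → ℝ) (v : I)
    (hℓ : ∀ k, 1 ≤ ℓ k)
    (hC : ∀ e ∈ L, 0 ≤ C e)
    (hlam : ∀ k s, 0 ≤ lam k s)
    (hx : ∀ u k s, x u k s = 0 ∨ x u k s = 1)
    (hr : ∀ e ∈ L, ∀ k s, 0 ≤ r e k s)
    (hcap : ∀ e ∈ L, ∑ k, ∑ s ∈ Finset.range (ℓ k + 1), lam k s * r e k s ≤ C e)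
    (hcons0 : ∀ k, (∑ j ∈ Finset.univ.filter (fun j => (j, v) ∈ L), r (j, v) k 0)
      - ∑ j ∈ Finset.univ.filter (fun j => (v, j) ∈ L), r (v, j) k 0 = x v k 1)
    (hcons : ∀ k, ∀ s, 1 ≤ s → s < ℓ k →
      (∑ j ∈ Finset.univ.filter (fun j => (j, v) ∈ L), r (j, v) k s)
      - ∑ j ∈ Finset.univ.filter (fun j => (v, j) ∈ L), r (v, j) k s
      = x v k (s + 1) - x v k s) :
    ∑ k, (lam k 0 * x v k 1
        + ∑ s ∈ Finset.Ico 1 (ℓ k), lam k s * max (x v k (s + 1) - x v k s) 0)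
      ≤ ∑ j ∈ Finset.univ.filter (fun j => (j, v) ∈ L), C (j, v) :=
  link_capacity_valid_inequality_general L C ℓ lam x r v hlam hr hcap hcons0 hcons
end
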